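/- Let τ, x₀, ξ₀, y₀, η₀ ∈ ℂ, and define the functions g_{(x₀,ξ₀),τ} and g_{(y₀,η₀),τ} from ℝ to ℂ by g_{(x₀,ξ₀),τ}(x) = exp(−πi·x₀·ξ₀ + 2πi·ξ₀·x + πi·τ·(x − x₀)²) and similarly for (y₀,η₀). Then there exists c₀ ∈ ℂ such that g_{(x₀,ξ₀),τ}(x) = c₀·g_{(y₀,η₀),τ}(x) for all x ∈ ℝ if and only if ξ₀ − η₀ = τ·(x₀ − y₀); and in that case g_{(x₀,ξ₀),τ}(x) = exp(πi·(ξ₀·y₀ − η₀·x₀))·g_{(y₀,η₀),τ}(x) for all x ∈ ℝ. -/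
import Mathlib


/-- The shifted Gaussian `g_{(x₀,ξ₀),τ}(x) = exp(-πix₀ξ₀ + 2πiξ₀x + πiτ(x - x₀)²)`. -/
noncomputable def shiftedGaussian (x₀ ξ₀ τ : ℂ) (x : ℝ) : ℂ :=
  Complex.exp (-(Real.pi : ℂ) * Complex.I * x₀ * ξ₀ + 2 * (Real.pi : ℂ) * Complex.I * ξ₀ * (x : ℂ)
    + (Real.pi : ℂ) * Complex.I * τ * ((x : ℂ) - x₀) ^ 2)

lemma shiftedGaussian_ratio (τ x₀ ξ₀ y₀ η₀ : ℂ) (x : ℝ) :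
    shiftedGaussian x₀ ξ₀ τ x =
      Complex.exp ((Real.pi : ℂ) * Complex.I * (τ * (x₀ ^ 2 - y₀ ^ 2) - x₀ * ξ₀ + y₀ * η₀)
        + 2 * (Real.pi : ℂ) * Complex.I * (ξ₀ - η₀ - τ * (x₀ - y₀)) * (x : ℂ))
      * shiftedGaussian y₀ η₀ τ x := by
  unfold shiftedGaussian
  rw [← Complex.exp_add]
  congr 1
  ring

lemma exp_linear_const {B : ℂ} (h : ∀ x : ℝ, Complex.exp (B * (x : ℂ)) = 1) : B = 0 := by
  have h1 : HasDerivAt (fun x : ℝ => B * (x : ℂ)) B 0 := by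
    simpa using ((Complex.ofRealCLM.hasDerivAt (x := (0:ℝ))).const_mul B)
  have h2 : HasDerivAt (fun x : ℝ => Complex.exp (B * (x : ℂ)))
      (Complex.exp (B * ((0:ℝ) : ℂ)) * B) 0 := h1.cexp
  have h3 : (fun x : ℝ => Complex.exp (B * (x : ℂ))) = fun _ : ℝ => (1 : ℂ) := funext h
  rw [h3] at h2
  have h4 : HasDerivAt (fun _ : ℝ => (1 : ℂ)) 0 (0:ℝ) := hasDerivAt_const _ _
  have := h2.unique h4
  simpa using this

/-- Two shifted Gaussians with the same `τ` are proportional iff `ξ₀ - η₀ = τ(x₀ - y₀)`,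
and in that case the constant is `exp(πi(ξ₀y₀ - η₀x₀))`. -/
theorem stmt11 (τ x₀ ξ₀ y₀ η₀ : ℂ) :
    ((∃ c₀ : ℂ, ∀ x : ℝ, shiftedGaussian x₀ ξ₀ τ x = c₀ * shiftedGaussian y₀ η₀ τ x)
      ↔ ξ₀ - η₀ = τ * (x₀ - y₀)) ∧
    (ξ₀ - η₀ = τ * (x₀ - y₀) →
      ∀ x : ℝ, shiftedGaussian x₀ ξ₀ τ x
        = Complex.exp ((Real.pi : ℂ) * Complex.I * (ξ₀ * y₀ - η₀ * x₀))
          * shiftedGaussian y₀ η₀ τ x) := by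
  set A : ℂ := (Real.pi : ℂ) * Complex.I * (τ * (x₀ ^ 2 - y₀ ^ 2) - x₀ * ξ₀ + y₀ * η₀) with hA
  set B : ℂ := 2 * (Real.pi : ℂ) * Complex.I * (ξ₀ - η₀ - τ * (x₀ - y₀)) with hB
  have key : ∀ x : ℝ, shiftedGaussian x₀ ξ₀ τ x
      = Complex.exp (A + B * (x : ℂ)) * shiftedGaussian y₀ η₀ τ x := by
    intro x
    rw [hA, hB]
    exact shiftedGaussian_ratio τ x₀ ξ₀ y₀ η₀ x
  have case2 : ξ₀ - η₀ = τ * (x₀ - y₀) →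
      ∀ x : ℝ, shiftedGaussian x₀ ξ₀ τ x
        = Complex.exp ((Real.pi : ℂ) * Complex.I * (ξ₀ * y₀ - η₀ * x₀))
          * shiftedGaussian y₀ η₀ τ x := by
    intro hd x
    rw [key x]
    congr 2
    have hB0 : B = 0 := by rw [hB, sub_eq_zero.mpr hd]; ring
    rw [hB0, hA]
    linear_combination (-(↑Real.pi * Complex.I * (x₀ + y₀))) * hd
  refine ⟨⟨?_, fun hd => ⟨Complex.exp ((Real.pi : ℂ) * Complex.I * (ξ₀ * y₀ - η₀ * x₀)), case2 hd⟩⟩, case2⟩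
  rintro ⟨c₀, hc⟩
  have hne : ∀ x : ℝ, shiftedGaussian y₀ η₀ τ x ≠ 0 := fun x => Complex.exp_ne_zero _
  have hconst : ∀ x : ℝ, Complex.exp (A + B * (x : ℂ)) = c₀ := by
    intro x
    have h1 := hc x
    rw [key x] at h1
    exact mul_right_cancel₀ (hne x) h1
  have h0 : Complex.exp A = c₀ := by simpa using hconst 0
  have hB1 : ∀ x : ℝ, Complex.exp (B * (x : ℂ)) = 1 := by
    intro x
    have := hconst x
    rw [Complex.exp_add, h0] at this
    have hc0 : c₀ ≠ 0 := by rw [← h0]; exact Complex.exp_ne_zero _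
    field_simp at this
    exact this
  have hB0 : B = 0 := exp_linear_const hB1
  have h2pi : (2 : ℂ) * (Real.pi : ℂ) * Complex.I ≠ 0 := by
    simp [Real.pi_ne_zero, Complex.I_ne_zero]
  rw [hB] at hB0
  exact sub_eq_zero.mp ((mul_eq_zero.mp hB0).resolve_left h2pi)
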